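/- Let C > 0 and d ≥ 3. Let G(x,y,z) := ∫_{ℝ^d} ( |x−x'|² + |y−z−x'|² )^{(2−2d)/2} e^{−(|x−x'|²+|y−z−x'|²)/C} dx'. Then G(x,y,z) ≤ C' ( |x−y+z|^{2−d} + 1 ) for a constant C' depending only on C and d. -/

import Mathlib

open MeasureTheory Set Metric Real
set_option maxHeartbeats 1000000


lemma aux_not_integrableOn (d : ℕ) (hd : 3 ≤ d) :
    ¬ IntegrableOn (fun u : EuclideanSpace ℝ (Fin d) => ‖u‖ ^ ((2:ℝ) - 2*d))
      (closedBall 0 1) volume := by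
  haveI : Nontrivial (EuclideanSpace ℝ (Fin d)) :=
    Module.nontrivial_of_finrank_pos (R := ℝ) (by rw [finrank_euclideanSpace_fin]; omega)
  intro h
  set q : ℝ := 2 - 2*d with hq
  have hfr : Module.finrank ℝ (EuclideanSpace ℝ (Fin d)) = d := finrank_euclideanSpace_fin
  set f : EuclideanSpace ℝ (Fin d) → ℝ := fun u => ‖u‖ ^ q with hf
  have hf_nonneg : ∀ u, 0 ≤ f u := fun u => rpow_nonneg (norm_nonneg u) q
  set φ : EuclideanSpace ℝ (Fin d) → ℝ :=
    (closedBall (0:EuclideanSpace ℝ (Fin d)) 1).indicator f with hφ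
  have hscale := MeasureTheory.Measure.integral_comp_smul (μ := volume) φ 2
  have h2 : ∀ u : EuclideanSpace ℝ (Fin d), φ ((2:ℝ) • u)
      = (closedBall (0:EuclideanSpace ℝ (Fin d)) (1/2)).indicator
          (fun u => (2:ℝ)^q * f u) u := by
    intro u
    simp only [hφ]
    have hn : ‖(2:ℝ) • u‖ = 2 * ‖u‖ := by rw [norm_smul]; simp
    by_cases hu : u ∈ closedBall (0:EuclideanSpace ℝ (Fin d)) (1/2)
    · have hmem : (2:ℝ) • u ∈ closedBall (0:EuclideanSpace ℝ (Fin d)) 1 := by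
        simp only [mem_closedBall, dist_zero_right] at hu ⊢
        rw [hn]; linarith
      rw [indicator_of_mem hmem, indicator_of_mem hu]
      simp only [hf, hn]
      rw [mul_rpow (by norm_num) (norm_nonneg u)]
    · have hmem : (2:ℝ) • u ∉ closedBall (0:EuclideanSpace ℝ (Fin d)) 1 := by
        simp only [mem_closedBall, dist_zero_right] at hu ⊢
        rw [hn]; linarith
      rw [indicator_of_notMem hmem, indicator_of_notMem hu]
  set A : ℝ := ∫ u in closedBall (0:EuclideanSpace ℝ (Fin d)) (1/2), f u with hA
  set B : ℝ := ∫ u in closedBall (0:EuclideanSpace ℝ (Fin d)) 1, f u with hB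
  have hrel : (2:ℝ)^q * A = ((2:ℝ)^d)⁻¹ * B := by
    have l1 : ∫ u : EuclideanSpace ℝ (Fin d), φ ((2:ℝ) • u) = (2:ℝ)^q * A := by
      simp_rw [h2]
      rw [integral_indicator measurableSet_closedBall, integral_const_mul]
    have l2 : ∫ u : EuclideanSpace ℝ (Fin d), φ u = B := by
      rw [hφ, integral_indicator measurableSet_closedBall]
    rw [l1, l2, hfr] at hscale
    rw [hscale, smul_eq_mul, abs_of_nonneg (by positivity)]
  have hsub : closedBall (0:EuclideanSpace ℝ (Fin d)) (1/2) ⊆ closedBall 0 1 :=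
    closedBall_subset_closedBall (by norm_num)
  have hAint : IntegrableOn f (closedBall (0:EuclideanSpace ℝ (Fin d)) (1/2)) volume :=
    h.mono_set hsub
  have hAB : A ≤ B :=
    setIntegral_mono_set h (Filter.Eventually.of_forall hf_nonneg)
      (HasSubset.Subset.eventuallyLE hsub)
  have hApos : 0 < A := by
    rw [hA, setIntegral_pos_iff_support_of_nonneg_ae
      (Filter.Eventually.of_forall hf_nonneg) hAint]
    have hsub2 : closedBall (0:EuclideanSpace ℝ (Fin d)) (1/2) \ {0}
        ⊆ Function.support f ∩ closedBall 0 (1/2) := by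
      intro u hu
      refine ⟨?_, hu.1⟩
      have hu0 : u ≠ 0 := by simpa using hu.2
      have : 0 < ‖u‖ := norm_pos_iff.2 hu0
      exact ne_of_gt (rpow_pos_of_pos this q)
    refine lt_of_lt_of_le ?_ (measure_mono hsub2)
    rw [measure_diff_null (measure_singleton 0)]
    exact measure_closedBall_pos volume 0 (by norm_num)
  have h2q : (2:ℝ)^(d:ℕ) * (2:ℝ)^q ≤ 1/2 := by
    rw [← rpow_natCast (2:ℝ) d, ← rpow_add (by norm_num)]
    have he : (d:ℝ) + q = 2 - d := by rw [hq]; ring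
    rw [he]
    have hcast : (3:ℝ) ≤ (d:ℝ) := by exact_mod_cast hd
    calc (2:ℝ) ^ ((2:ℝ) - d) ≤ (2:ℝ) ^ (-1:ℝ) :=
          rpow_le_rpow_of_exponent_le one_le_two (by linarith)
      _ = 1/2 := by rw [rpow_neg_one]; norm_num
  have hBA : B = (2:ℝ)^(d:ℕ) * ((2:ℝ)^q * A) := by
    rw [hrel]
    field_simp
  have hq_pos : (0:ℝ) < (2:ℝ)^q := rpow_pos_of_pos (by norm_num) q
  nlinarith [hBA, hAB, hApos, h2q, mul_le_mul_of_nonneg_right h2q hApos.le]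

lemma key16 (d : ℕ) (hd : 3 ≤ d) (C : ℝ) (hC : 0 < C) :
    ∃ C' : ℝ, 0 < C' ∧ ∀ w : EuclideanSpace ℝ (Fin d),
      (∫ u : EuclideanSpace ℝ (Fin d),
          (‖u‖^2 + ‖w - u‖^2) ^ (((2:ℝ) - 2*d) / 2)
            * Real.exp (-(‖u‖^2 + ‖w - u‖^2) / C))
        ≤ C' * (‖w‖ ^ ((2:ℝ) - d) + 1) := by
  haveI : Nontrivial (EuclideanSpace ℝ (Fin d)) :=
    Module.nontrivial_of_finrank_pos (R := ℝ) (by rw [finrank_euclideanSpace_fin]; omega)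
  have hfr : Module.finrank ℝ (EuclideanSpace ℝ (Fin d)) = d := finrank_euclideanSpace_fin
  have hdr : (3:ℝ) ≤ (d:ℝ) := by exact_mod_cast hd
  set p : ℝ := ((2:ℝ) - 2*d)/2 with hp
  have hp_neg : p ≤ 0 := by rw [hp]; linarith
  set cvol : ℝ := (volume (ball (0:EuclideanSpace ℝ (Fin d)) 1)).toReal with hcvol
  have hcvol_nonneg : 0 ≤ cvol := ENNReal.toReal_nonneg
  set g3 : EuclideanSpace ℝ (Fin d) → ℝ :=
    fun u => 2^(2*(d:ℝ)-2) * (1+‖u‖) ^ ((2:ℝ) - 2*d) with hg3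
  have hg3nn : ∀ u, 0 ≤ g3 u := by intro u; rw [hg3]; positivity
  have hg3int : Integrable g3 := by
    have h1 : ((Module.finrank ℝ (EuclideanSpace ℝ (Fin d)) : ℝ)) < 2*(d:ℝ)-2 := by
      rw [hfr]; linarith
    have h2 := (integrable_one_add_norm (μ := (volume : Measure (EuclideanSpace ℝ (Fin d)))) h1).const_mul
      ((2:ℝ)^(2*(d:ℝ)-2))
    have hexp : -(2*(d:ℝ)-2) = (2:ℝ)-2*d := by ring
    simpa [hg3, hexp] using h2
  set K : ℝ := ∫ u, g3 u with hK
  have hK_nonneg : 0 ≤ K := integral_nonneg hg3nn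
  set c1 : ℝ := cvol / 2^p with hc1
  have hc1_nonneg : 0 ≤ c1 := by rw [hc1]; positivity
  set c2 : ℝ := (d:ℝ) * cvol with hc2
  have hc2_nonneg : 0 ≤ c2 := by rw [hc2]; positivity
  refine ⟨c1 + c2 + K + 1, by positivity, fun w => ?_⟩
  by_cases hw : w = 0
  · subst hw
    have hne : ((2:ℝ) - d) ≠ 0 := by intro h; rw [sub_eq_zero] at h; linarith
    rw [norm_zero, Real.zero_rpow hne, zero_add, mul_one]
    have hnint : ¬ Integrable (fun u : EuclideanSpace ℝ (Fin d) =>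
        (‖u‖^2 + ‖(0:EuclideanSpace ℝ (Fin d)) - u‖^2) ^ p
          * Real.exp (-(‖u‖^2 + ‖(0:EuclideanSpace ℝ (Fin d)) - u‖^2) / C)) := by
      intro hint
      apply aux_not_integrableOn d hd
      set c0 : ℝ := 2^(-p) * Real.exp (2/C) with hc0
      have hmono := (hint.integrableOn
        (s := closedBall (0:EuclideanSpace ℝ (Fin d)) 1)).const_mul c0
      refine Integrable.mono' hmono ?_ ?_
      · exact ((by fun_prop : Measurable fun u : EuclideanSpace ℝ (Fin d) =>
          ‖u‖ ^ ((2:ℝ) - 2*d))).aestronglyMeasurable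
      · refine (ae_restrict_iff' measurableSet_closedBall).2 (Filter.Eventually.of_forall ?_)
        intro u hu
        have hu1 : ‖u‖ ≤ 1 := by simpa [dist_zero_right] using hu
        simp only [zero_sub, norm_neg]
        have hXnn : (0:ℝ) ≤ ‖u‖ ^ ((2:ℝ) - 2*d) := rpow_nonneg (norm_nonneg u) _
        rw [Real.norm_eq_abs, abs_of_nonneg hXnn]
        have e1 : (‖u‖^2 + ‖u‖^2 : ℝ) = 2*‖u‖^2 := by ring
        rw [e1]
        have e2 : ((2*‖u‖^2 : ℝ))^p = 2^p * ‖u‖^((2:ℝ)-2*d) := by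
          rw [mul_rpow (by norm_num) (by positivity)]
          congr 1
          rw [← rpow_natCast ‖u‖ 2, ← rpow_mul (norm_nonneg u)]
          congr 1
          push_cast
          rw [hp]; ring
        rw [e2]
        have hs2 : 2*‖u‖^2 ≤ 2 := by nlinarith [norm_nonneg u]
        have hexp : (1:ℝ) ≤ Real.exp (2/C) * Real.exp (-(2*‖u‖^2)/C) := by
          rw [← Real.exp_add]
          apply Real.one_le_exp
          rw [← add_div]
          apply div_nonneg _ hC.le
          linarith
        have h2p : (2:ℝ)^(-p) * (2:ℝ)^p = 1 := by
          rw [← rpow_add (by norm_num : (0:ℝ) < 2)]; norm_num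
        have hexppos : (0:ℝ) < Real.exp (-(2*‖u‖^2)/C) := Real.exp_pos _
        have h2ppos : (0:ℝ) < (2:ℝ)^p := rpow_pos_of_pos (by norm_num) p
        rw [hc0]
        nlinarith [mul_le_mul_of_nonneg_left hexp hXnn]
    rw [integral_undef hnint]
    positivity
  · set D : ℝ := ‖w‖ with hD
    have hDpos : 0 < D := norm_pos_iff.2 hw
    have hS_lb : ∀ u : EuclideanSpace ℝ (Fin d), D^2/2 ≤ ‖u‖^2 + ‖w - u‖^2 := by
      intro u
      have h1 : D ≤ ‖u‖ + ‖w - u‖ := by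
        have he : u + (w - u) = w := by abel
        calc D = ‖u + (w-u)‖ := by rw [he]
          _ ≤ ‖u‖ + ‖w-u‖ := norm_add_le _ _
      nlinarith [norm_nonneg u, norm_nonneg (w-u), sq_nonneg (‖u‖ - ‖w-u‖)]
    set g1 : EuclideanSpace ℝ (Fin d) → ℝ :=
      (ball (0:EuclideanSpace ℝ (Fin d)) D).indicator (fun _ => (D^2/2)^p) with hg1
    set f2 : ℝ → ℝ := (Icc D 1).indicator (fun r => D^((3:ℝ)-d) * r^((-1:ℝ)-d)) with hf2
    set g2 : EuclideanSpace ℝ (Fin d) → ℝ := fun u => f2 ‖u‖ with hg2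
    have hg1nn : ∀ u, 0 ≤ g1 u := fun u =>
      indicator_nonneg (fun a _ => rpow_nonneg (by positivity) p) u
    have hf2nn : ∀ r, 0 ≤ f2 r := fun r =>
      indicator_nonneg (fun a ha => by
        have ha0 : (0:ℝ) < a := lt_of_lt_of_le hDpos ha.1
        positivity) r
    have hg2nn : ∀ u, 0 ≤ g2 u := fun u => hf2nn _
    -- pointwise bound
    have hpt : ∀ u : EuclideanSpace ℝ (Fin d),
        (‖u‖^2 + ‖w - u‖^2) ^ p * Real.exp (-(‖u‖^2 + ‖w - u‖^2) / C)
          ≤ g1 u + g2 u + g3 u := by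
      intro u
      have hSnn : (0:ℝ) ≤ ‖u‖^2 + ‖w - u‖^2 := by positivity
      have hSpos : (0:ℝ) < ‖u‖^2 + ‖w - u‖^2 := lt_of_lt_of_le (by positivity) (hS_lb u)
      have hexp1 : Real.exp (-(‖u‖^2 + ‖w - u‖^2)/C) ≤ 1 := by
        rw [show (1:ℝ) = Real.exp 0 from (Real.exp_zero).symm]
        apply Real.exp_le_exp.2
        apply div_nonpos_of_nonpos_of_nonneg _ hC.le
        linarith
      have hF1 : (‖u‖^2 + ‖w - u‖^2) ^ p * Real.exp (-(‖u‖^2 + ‖w - u‖^2)/C)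
          ≤ (‖u‖^2 + ‖w - u‖^2) ^ p :=
        mul_le_of_le_one_right (rpow_nonneg hSnn p) hexp1
      rcases lt_or_ge ‖u‖ D with h|h
      · have hmem : u ∈ ball (0:EuclideanSpace ℝ (Fin d)) D := mem_ball_zero_iff.2 h
        have hg1u : g1 u = (D^2/2)^p := by rw [hg1]; exact indicator_of_mem hmem _
        have h2 : (‖u‖^2 + ‖w - u‖^2) ^ p ≤ (D^2/2)^p :=
          rpow_le_rpow_of_nonpos (by positivity) (hS_lb u) hp_neg
        have := hg2nn u; have := hg3nn u
        linarith
      · have hu0 : (0:ℝ) < ‖u‖ := lt_of_lt_of_le hDpos h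
        have hSu2 : ‖u‖^2 ≤ ‖u‖^2 + ‖w - u‖^2 := le_add_of_nonneg_right (by positivity)
        have h2 : (‖u‖^2 + ‖w - u‖^2) ^ p ≤ ((‖u‖^2 : ℝ)) ^ p :=
          rpow_le_rpow_of_nonpos (by positivity) hSu2 hp_neg
        rcases le_or_gt ‖u‖ 1 with h1|h1
        · have hmem : ‖u‖ ∈ Icc D 1 := ⟨h, h1⟩
          have hg2u : g2 u = D^((3:ℝ)-d) * ‖u‖^((-1:ℝ)-d) := by
            rw [hg2, hf2]; exact indicator_of_mem hmem _
          have h3 : ((‖u‖^2:ℝ))^p = ‖u‖ ^ ((3:ℝ)-d) * ‖u‖ ^ ((-1:ℝ)-d) := by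
            rw [← rpow_natCast ‖u‖ 2, ← rpow_mul (norm_nonneg u), ← rpow_add hu0]
            congr 1
            push_cast
            rw [hp]; ring
          have h4 : ‖u‖ ^ ((3:ℝ)-d) ≤ D ^ ((3:ℝ)-d) :=
            rpow_le_rpow_of_nonpos hDpos h (by linarith)
          have h5 : ‖u‖ ^ ((3:ℝ)-d) * ‖u‖ ^ ((-1:ℝ)-d) ≤ D^((3:ℝ)-d) * ‖u‖^((-1:ℝ)-d) :=
            mul_le_mul_of_nonneg_right h4 (rpow_nonneg hu0.le _)
          have := hg1nn u; have := hg3nn u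
          rw [hg2u]
          linarith [h3 ▸ h2]
        · have h3 : ((‖u‖^2:ℝ))^p = ‖u‖ ^ ((2:ℝ) - 2*d) := by
            rw [← rpow_natCast ‖u‖ 2, ← rpow_mul (norm_nonneg u)]
            congr 1
            push_cast
            rw [hp]; ring
          have h5 : (1:ℝ) + ‖u‖ ≤ 2 * ‖u‖ := by linarith
          have h6 : ((2*‖u‖ : ℝ)) ^ ((2:ℝ)-2*d) ≤ (1+‖u‖) ^ ((2:ℝ)-2*d) :=
            rpow_le_rpow_of_nonpos (by linarith) h5 (by linarith)
          have h7 : ((2*‖u‖:ℝ)) ^ ((2:ℝ)-2*d) = 2^((2:ℝ)-2*d) * ‖u‖^((2:ℝ)-2*d) :=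
            mul_rpow (by norm_num) (norm_nonneg u)
          have h8 : (2:ℝ)^(2*(d:ℝ)-2) * (2:ℝ)^((2:ℝ)-2*d) = 1 := by
            rw [← rpow_add (by norm_num : (0:ℝ) < 2)]; norm_num
          have h9 : ‖u‖^((2:ℝ)-2*d) ≤ g3 u := by
            rw [hg3]
            have hpos : (0:ℝ) < (2:ℝ)^(2*(d:ℝ)-2) := rpow_pos_of_pos (by norm_num) _
            calc ‖u‖^((2:ℝ)-2*d)
                = ((2:ℝ)^(2*(d:ℝ)-2) * (2:ℝ)^((2:ℝ)-2*d)) * ‖u‖^((2:ℝ)-2*d) := by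
                  rw [h8, one_mul]
              _ = (2:ℝ)^(2*(d:ℝ)-2) * ((2*‖u‖:ℝ)^((2:ℝ)-2*d)) := by rw [h7]; ring
              _ ≤ (2:ℝ)^(2*(d:ℝ)-2) * (1+‖u‖)^((2:ℝ)-2*d) :=
                  mul_le_mul_of_nonneg_left h6 hpos.le
          have := hg1nn u; have := hg2nn u
          linarith [h3 ▸ h2]
    -- integrability of g1, g2
    have hg1int : Integrable g1 := by
      rw [hg1]
      exact (integrable_indicator_iff measurableSet_ball).2
        (integrableOn_const measure_ball_lt_top.ne)
    have hf2meas : Measurable f2 := by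
      rw [hf2]
      exact Measurable.indicator (by fun_prop) measurableSet_Icc
    have hg2int : Integrable g2 := by
      have hbint : Integrable ((closedBall (0:EuclideanSpace ℝ (Fin d)) 1).indicator
          (fun _ => D^((3:ℝ)-d) * D^((-1:ℝ)-d))) :=
        (integrable_indicator_iff measurableSet_closedBall).2
          (integrableOn_const measure_closedBall_lt_top.ne)
      refine hbint.mono' ((hf2meas.comp measurable_norm).aestronglyMeasurable) ?_
      refine Filter.Eventually.of_forall (fun u => ?_)
      rw [Real.norm_eq_abs, abs_of_nonneg (hg2nn u)]
      simp only [hg2, hf2]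
      by_cases hmem : ‖u‖ ∈ Icc D 1
      · rw [indicator_of_mem hmem]
        have humem : u ∈ closedBall (0:EuclideanSpace ℝ (Fin d)) 1 :=
          mem_closedBall_zero_iff.2 hmem.2
        rw [indicator_of_mem humem]
        exact mul_le_mul_of_nonneg_left
          (rpow_le_rpow_of_nonpos hDpos hmem.1 (by linarith))
          (rpow_nonneg hDpos.le _)
      · rw [indicator_of_notMem hmem]
        exact indicator_nonneg (fun a _ => by positivity) u
    -- value of ∫ g1
    have e1 : ∫ u, g1 u = c1 * D ^ ((2:ℝ) - d) := by
      rw [hg1, integral_indicator_const _ measurableSet_ball, smul_eq_mul]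
      rw [measureReal_def, Measure.addHaar_ball (μ := volume) (x := (0 : EuclideanSpace ℝ (Fin d))) (hr := hDpos.le), ENNReal.toReal_mul,
        ENNReal.toReal_ofReal (by positivity), hfr, ← hcvol]
      rw [div_rpow (by positivity) (by norm_num : (0:ℝ) ≤ 2)]
      have hDp : ((D^(2:ℕ):ℝ)) ^ p = D ^ (2*p) := by
        rw [← rpow_natCast D 2, ← rpow_mul hDpos.le]
        norm_num
      rw [hDp, ← rpow_natCast D d]
      rw [hc1]
      rw [show D ^ ((d:ℕ):ℝ) * cvol * (D ^ (2*p) / 2^p)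
          = (cvol / 2^p) * (D ^ ((d:ℕ):ℝ) * D ^ (2*p)) from by ring]
      rw [← rpow_add hDpos]
      congr 1
      push_cast
      rw [hp]; ring
    -- bound on ∫ g2
    have e2 : ∫ u, g2 u ≤ c2 * D ^ ((2:ℝ) - d) := by
      have hrad := integral_fun_norm_addHaar (volume : Measure (EuclideanSpace ℝ (Fin d))) f2
      rw [hfr] at hrad
      rw [hg2]
      rw [hrad]
      have step1 : ∫ r in Ioi (0:ℝ), r ^ (d-1) • f2 r
          = D^((3:ℝ)-d) * ∫ r in Icc D 1, r^((-2):ℝ) := by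
        rw [hf2]
        have hcongr : ∀ r ∈ Ioi (0:ℝ), r ^ (d-1) • ((Icc D 1).indicator
            (fun r => D^((3:ℝ)-d) * r^((-1:ℝ)-d)) r)
            = (Icc D 1).indicator (fun r => D^((3:ℝ)-d) * r^((-2):ℝ)) r := by
          intro r hr
          have hrpos : (0:ℝ) < r := hr
          by_cases hmem : r ∈ Icc D 1
          · rw [indicator_of_mem hmem, indicator_of_mem hmem, smul_eq_mul]
            have hcast : (r:ℝ) ^ (d-1:ℕ) = r ^ (((d:ℝ))-1) := by
              rw [← rpow_natCast r (d-1)]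
              congr 1
              push_cast [Nat.cast_sub (by omega : 1 ≤ d)]
              ring
            rw [hcast]
            calc r ^ ((d:ℝ)-1) * (D^((3:ℝ)-d) * r^((-1:ℝ)-d))
                = D^((3:ℝ)-d) * (r ^ ((d:ℝ)-1) * r^((-1:ℝ)-d)) := by ring
              _ = D^((3:ℝ)-d) * r ^ (((d:ℝ)-1) + ((-1:ℝ)-d)) := by
                  rw [← rpow_add hrpos]
              _ = D^((3:ℝ)-d) * r^((-2):ℝ) := by norm_num
          · rw [indicator_of_notMem hmem, indicator_of_notMem hmem, smul_zero]
        rw [setIntegral_congr_fun measurableSet_Ioi hcongr]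
        rw [setIntegral_indicator measurableSet_Icc]
        have hss : Icc D 1 ⊆ Ioi (0:ℝ) := fun r hr => lt_of_lt_of_le hDpos hr.1
        rw [inter_eq_self_of_subset_right hss]
        exact integral_const_mul _ _
      rw [step1]
      have hI : ∫ r in Icc D 1, r^((-2):ℝ) ≤ D⁻¹ := by
        rcases le_or_gt D 1 with hD1 | hD1
        · rw [MeasureTheory.integral_Icc_eq_integral_Ioc,
            ← intervalIntegral.integral_of_le hD1]
          rw [integral_rpow
            (Or.inr ⟨by norm_num, notMem_uIcc_of_lt hDpos (by norm_num)⟩)]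
          have : ((1:ℝ) ^ ((-2:ℝ)+1) - D ^ ((-2:ℝ)+1)) / ((-2:ℝ)+1) = D⁻¹ - 1 := by
            rw [show ((-2:ℝ)+1) = (-1:ℝ) by norm_num, one_rpow, rpow_neg_one]
            ring
          rw [this]
          linarith
        · rw [Icc_eq_empty (by linarith)]
          simp
          positivity
      have hD3 : (0:ℝ) ≤ D^((3:ℝ)-d) := rpow_nonneg hDpos.le _
      have hfin : D^((3:ℝ)-d) * D⁻¹ = D^((2:ℝ)-d) := by
        rw [← rpow_neg_one D, ← rpow_add hDpos]
        congr 1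
        ring
      calc (d:ℕ) • cvol • (D^((3:ℝ)-d) * ∫ r in Icc D 1, r^((-2):ℝ))
          = (d:ℝ) * (cvol * (D^((3:ℝ)-d) * ∫ r in Icc D 1, r^((-2):ℝ))) := by
            rw [nsmul_eq_mul, smul_eq_mul]
        _ ≤ (d:ℝ) * (cvol * (D^((3:ℝ)-d) * D⁻¹)) := by
            apply mul_le_mul_of_nonneg_left _ (by positivity)
            apply mul_le_mul_of_nonneg_left _ hcvol_nonneg
            exact mul_le_mul_of_nonneg_left hI hD3
        _ = c2 * D^((2:ℝ)-d) := by rw [hfin, hc2]; ring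
    -- conclude
    calc (∫ u : EuclideanSpace ℝ (Fin d),
          (‖u‖^2 + ‖w - u‖^2) ^ p * Real.exp (-(‖u‖^2 + ‖w - u‖^2) / C))
        ≤ ∫ u, (g1 u + g2 u + g3 u) := by
          apply integral_mono_of_nonneg
          · exact Filter.Eventually.of_forall (fun u => by positivity)
          · exact (hg1int.add hg2int).add hg3int
          · exact Filter.Eventually.of_forall hpt
      _ = (∫ u, g1 u) + (∫ u, g2 u) + (∫ u, g3 u) := by
          have h12 : Integrable (fun u => g1 u + g2 u) := hg1int.add hg2int
          rw [integral_add h12 hg3int, integral_add hg1int hg2int]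
      _ ≤ c1 * D^((2:ℝ)-d) + c2 * D^((2:ℝ)-d) + K := by
          rw [e1, ← hK]
          linarith [e2]
      _ ≤ (c1 + c2 + K + 1) * (D ^ ((2:ℝ) - d) + 1) := by
          have hDnn : (0:ℝ) ≤ D ^ ((2:ℝ)-d) := rpow_nonneg hDpos.le _
          nlinarith


/-- for d ≥ 3,
G(x,y,z) = ∫ (|x−x'|²+|y−z−x'|²)^{(2−2d)/2} e^{−(|x−x'|²+|y−z−x'|²)/C} dx'
is bounded by C'(|x−y+z|^{2−d} + 1). -/
theorem stmt16 (d : ℕ) (hd : 3 ≤ d) (C : ℝ) (hC : 0 < C) :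
    ∃ C' : ℝ, 0 < C' ∧
      ∀ x y z : EuclideanSpace ℝ (Fin d),
        (∫ x' : EuclideanSpace ℝ (Fin d),
            (‖x - x'‖^2 + ‖y - z - x'‖^2) ^ (((2:ℝ) - 2*d) / 2)
              * Real.exp (-(‖x - x'‖^2 + ‖y - z - x'‖^2) / C))
          ≤ C' * (‖x - y + z‖ ^ ((2:ℝ) - d) + 1) := by
  obtain ⟨C', hC', h⟩ := key16 d hd C hC
  refine ⟨C', hC', fun x y z => ?_⟩
  have hw := h (y - z - x)
  have htrans : (∫ x' : EuclideanSpace ℝ (Fin d),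
        (‖x - x'‖^2 + ‖y - z - x'‖^2) ^ (((2:ℝ) - 2*d) / 2)
          * Real.exp (-(‖x - x'‖^2 + ‖y - z - x'‖^2) / C))
      = ∫ u : EuclideanSpace ℝ (Fin d),
          (‖u‖^2 + ‖(y - z - x) - u‖^2) ^ (((2:ℝ) - 2*d) / 2)
            * Real.exp (-(‖u‖^2 + ‖(y - z - x) - u‖^2) / C) := by
    rw [← integral_add_right_eq_self (fun x' : EuclideanSpace ℝ (Fin d) =>
      (‖x - x'‖^2 + ‖y - z - x'‖^2) ^ (((2:ℝ) - 2*d) / 2)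
        * Real.exp (-(‖x - x'‖^2 + ‖y - z - x'‖^2) / C)) x]
    congr 1
    funext u
    have e1 : x - (u + x) = -u := by abel
    have e2 : y - z - (u + x) = (y - z - x) - u := by abel
    rw [e1, e2, norm_neg]
  rw [htrans]
  have hnorm : ‖x - y + z‖ = ‖y - z - x‖ := by
    rw [show x - y + z = -(y - z - x) from by abel, norm_neg]
  rw [hnorm]
  exact hw
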